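/- arXiv:cs/0003035 — 8 statements merged into one kernel-verified Lean document; each statement's English description precedes it below -/
import Mathlib

section
/- For every preference default theory form : ι → L.Sentence, the operator C is monotone: for all sets S, S' of L-sentences, if S ⊆ S' then C(S) ⊆ C(S'). (Proposition 1 of the paper.) -/
open FirstOrder Language

namespace Brevis

/-- The base language with a single binary relation symbol `R`. -/
def baseLang : Language where
  Functions := fun _ => Empty
  Relations := fun n => match n with
    | 2 => Unit
    | _ => Empty

/-- The binary relation symbol `R` of `baseLang`. -/
def Rsym : baseLang.Relations 2 := Unit.unit

/-- The base language with a binary relation symbol `R` and one 0-ary relation symbol `P`. -/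
def baseLangP : Language where
  Functions := fun _ => Empty
  Relations := fun n => match n with
    | 0 => Unit
    | 2 => Unit
    | _ => Empty

/-- The binary relation symbol `R` of `baseLangP`. -/
def RsymP : baseLangP.Relations 2 := Unit.unit

/-- The 0-ary relation symbol `P` of `baseLangP`. -/
def Psym : baseLangP.Relations 0 := Unit.unit

/-- The atomic sentence `p` given by the propositional symbol `P`. -/
def pSent (ι : Type) : (baseLangP[[ι]]).Sentence :=
  Relations.formula (Sum.inl Psym) ![]

variable (L₀ : FirstOrder.Language.{0, 0}) (R : L₀.Relations 2) (ι : Type) [Fintype ι]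

/-- The atomic sentence `d < d'`, i.e. `R (c_d) (c_d')`. -/
def ltSent (d d' : ι) : (L₀[[ι]]).Sentence :=
  Relations.boundedFormula₂ (Sum.inl R) (L₀.con d).term (L₀.con d').term

/-- The theory `SPO` asserting that `R` is a strict partial order (irreflexive and transitive). -/
def spo : (L₀[[ι]]).Theory :=
  {Relations.irreflexive (Sum.inl R), Relations.transitive (Sum.inl R)}

/-- A set of sentences is consistent iff together with `SPO` it is satisfiable. -/
def Consistent (S : (L₀[[ι]]).Theory) : Prop :=
  Theory.IsSatisfiable (S ∪ spo L₀ R ι)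

open scoped Classical in
/-- The extension base `B(e)` determined by the linear order `e` on the names. -/
noncomputable def base (e : LinearOrder ι) (form : ι → (L₀[[ι]]).Sentence) :
    (L₀[[ι]]).Theory :=
  letI := e
  (Finset.univ.sort (· ≤ · : ι → ι → Prop)).foldl
    (fun B d => if Consistent L₀ R ι (B ∪ {form d}) then B ∪ {form d} else B) ∅

/-- The deductive closure (modulo `SPO`) of a set of sentences:
all sentences satisfied in every model of `S ∪ SPO`. -/
def closure (S : (L₀[[ι]]).Theory) : Set (L₀[[ι]]).Sentence :=
  {φ | (S ∪ spo L₀ R ι) ⊨ᵇ φ}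

/-- The extension `E(e)` generated by the linear order `e`. -/
noncomputable def extension (e : LinearOrder ι) (form : ι → (L₀[[ι]]).Sentence) :
    Set (L₀[[ι]]).Sentence :=
  closure L₀ R ι (base L₀ R ι e form)

/-- A strict partial order `p` on the names is compatible with `S` iff
`S ∪ SPO ∪ {d < d' | p d d'} ∪ {¬ (d < d') | ¬ p d d'}` is satisfiable. -/
def Compatible (p : ι → ι → Prop) (S : (L₀[[ι]]).Theory) : Prop :=
  Theory.IsSatisfiable
    (S ∪ spo L₀ R ι ∪ {φ | ∃ d d', p d d' ∧ φ = ltSent L₀ R ι d d'} ∪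
      {φ | ∃ d d', ¬ p d d' ∧ φ = ∼(ltSent L₀ R ι d d')})

/-- `Exts form S`: the set of extensions `E(e)` where `e` is a linear order extending some
strict partial order compatible with `S`. -/
def Exts (form : ι → (L₀[[ι]]).Sentence) (S : (L₀[[ι]]).Theory) :
    Set (Set (L₀[[ι]]).Sentence) :=
  {E | ∃ (e : LinearOrder ι) (p : ι → ι → Prop), IsStrictOrder ι p ∧
    Compatible L₀ R ι p S ∧ (∀ d d', p d d' → e.lt d d') ∧ E = extension L₀ R ι e form}

/-- The operator `C`. -/
def C (form : ι → (L₀[[ι]]).Sentence) (S : (L₀[[ι]]).Theory) : (L₀[[ι]]).Theory :=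
  ⋂₀ Exts L₀ R ι form S

/-- The least fixed point of `C` (Knaster–Tarski): the set of accepted conclusions. -/
def lfpC (form : ι → (L₀[[ι]]).Sentence) : (L₀[[ι]]).Theory :=
  sInf {S | C L₀ R ι form S ⊆ S}


/-- Proposition 1: the operator `C` is monotone. -/
theorem C_monotone (ι : Type) [Fintype ι] (form : ι → (baseLang[[ι]]).Sentence)
    (S S' : (baseLang[[ι]]).Theory) (h : S ⊆ S') :
    C baseLang Rsym ι form S ⊆ C baseLang Rsym ι form S' := by
  intro φ hφ E hE
  obtain ⟨e, p, h1, h2, h3, h4⟩ := hE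
  exact hφ E ⟨e, p, h1, h2.mono (by gcongr), h3, h4⟩

end Brevis
end

section
/- For every preference default theory form : ι → L.Sentence, every accepted conclusion is contained in every preferred extension: for every preferred extension E of the theory, lfp(C) ⊆ E. (Proposition 2 of the paper.) -/
open FirstOrder Language

namespace Brevis

variable (L₀ : FirstOrder.Language.{0, 0}) (R : L₀.Relations 2) (ι : Type) [Fintype ι]

/-- Proposition 2: every accepted conclusion is contained in every preferred extension. -/
theorem accepted_subset_preferred (ι : Type) [Fintype ι]
    (form : ι → (baseLang[[ι]]).Sentence) (E : (baseLang[[ι]]).Theory)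
    (hE : E ∈ Exts baseLang Rsym ι form E) :
    lfpC baseLang Rsym ι form ⊆ E := by
  exact sInf_le (Set.sInter_subset_of_mem hE)

end Brevis
end

section
/- For every preference default theory form : ι → L.Sentence, the set of accepted conclusions is consistent: the theory lfp(C) ∪ SPO is satisfiable. (Proposition 3 of the paper.) -/
/-!
The operator `C` preserves consistency: a model of `S ∪ SPO` orders the names through the
constants, this strict partial order is compatible with `S`, and for any linear extension `e`
of it the extension `E(e)` lies in `Ext(S)`; `E(e)` is consistent because `B(e)` only ever
absorbs a default when the result stays consistent. By compactness consistency also survives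
unions of chains, so it holds at every stage of the transfinite iteration of `C` from `∅`,
and therefore at `lfp(C)`.
-/

open FirstOrder Language

theorem OrderHom.lfp_induction_of_isChain {α : Type*} [CompleteLattice α] (f : α →o α)
    {p : α → Prop} (bot : p ⊥) (step : ∀ a, p a → p (f a))
    (sSup_mem : ∀ s : Set α, s.Nonempty → IsChain (· ≤ ·) s → (∀ a ∈ s, p a) → p (sSup s)) :
    p f.lfp := by
  rw [← OrdinalApprox.lfpApprox_ord_eq_lfp]
  generalize (Order.succ (Cardinal.mk α)).ord = o
  induction o using WellFoundedLT.induction with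
  | _ a ih =>
    let stages : {b // b < a} → α := fun b => f (OrdinalApprox.lfpApprox f ⊥ b)
    have hstages : Monotone stages := fun b c hbc =>
      f.monotone (OrdinalApprox.lfpApprox_mono_right (f := f) (x := ⊥) hbc)
    have happrox : OrdinalApprox.lfpApprox f ⊥ a = sSup (insert ⊥ (Set.range stages)) := by
      rw [OrdinalApprox.lfpApprox, sSup_insert, sSup_range, iSup_subtype']
    rw [happrox]
    refine sSup_mem _ (Set.insert_nonempty _ _)
      (hstages.isChain_range.insert fun b _ _ => Or.inl bot_le) ?_
    rintro _ (rfl | ⟨b, rfl⟩)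
    · exact bot
    · exact step _ (ih b b.2)

theorem FirstOrder.Language.Theory.isSatisfiable_sUnion_union {L : Language} {T : L.Theory}
    {s : Set L.Theory} (hne : s.Nonempty) (hs : DirectedOn (· ⊆ ·) s)
    (h : ∀ S ∈ s, (S ∪ T).IsSatisfiable) : Theory.IsSatisfiable (⋃₀ s ∪ T) := by
  have := hne.to_subtype
  rw [Set.sUnion_eq_iUnion, Set.iUnion_union, Theory.isSatisfiable_directed_union_iff]
  · exact fun S => h S S.2
  · exact hs.directed_val.mono_comp _ (g := (· ∪ T)) fun _ _ => Set.union_subset_union_left T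

theorem exists_linearOrder_of_isStrictOrder {α : Type*} (p : α → α → Prop) [IsStrictOrder α p] :
    ∃ e : LinearOrder α, ∀ a b, p a b → e.lt a b := by
  let _ := partialOrderOfSO p
  refine ⟨(inferInstance : LinearOrder (LinearExtension α)), fun a b hab => ?_⟩
  exact toLinearExtension.monotone.strictMono_of_injective (fun _ _ h => h) (show a < b from hab)

namespace Brevis
open Structure
variable {L₀ : FirstOrder.Language.{0, 0}} {R : L₀.Relations 2} {ι : Type}

theorem realize_ltSent {M : Type*} [(L₀[[ι]]).Structure M] {d d' : ι} :
    M ⊨ ltSent L₀ R ι d d' ↔ RelMap (L := L₀[[ι]]) (Sum.inl R) ![(L₀.con d : M), L₀.con d'] := by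
  refine (BoundedFormula.realize_rel₂ (L := L₀[[ι]]) (α := Empty) (l := 0)).trans ?_
  simp only [Term.realize_constants]

theorem spo_isSatisfiable : (spo L₀ R ι).IsSatisfiable := by
  let _ : (L₀[[ι]]).Structure Unit := ⟨fun _ _ => (), fun _ _ => False⟩
  have : Unit ⊨ spo L₀ R ι := by
    refine (Theory.model_iff _).2 ?_
    rintro φ (rfl | rfl)
    · exact Relations.realize_irreflexive.2 ⟨fun _ => id⟩
    · exact Relations.realize_transitive.2 ⟨fun _ _ _ h _ => h.elim⟩
  exact Theory.Model.isSatisfiable Unit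

theorem consistent_empty : Consistent L₀ R ι ∅ := by
  rw [Consistent, Set.empty_union]
  exact spo_isSatisfiable

theorem Consistent.mono {S S' : (L₀[[ι]]).Theory} (h : S ⊆ S') (hS' : Consistent L₀ R ι S') :
    Consistent L₀ R ι S :=
  Theory.IsSatisfiable.mono hS' (Set.union_subset_union_left _ h)

theorem consistent_closure {S : (L₀[[ι]]).Theory} (h : Consistent L₀ R ι S) :
    Consistent L₀ R ι (closure L₀ R ι S) := by
  obtain ⟨M⟩ := h
  have : M ⊨ closure L₀ R ι S ∪ spo L₀ R ι :=
    Theory.model_union_iff.2 ⟨⟨fun _ hφ => Theory.ModelsBoundedFormula.realize_sentence hφ M⟩,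
      M.is_model.mono Set.subset_union_right⟩
  exact Theory.Model.isSatisfiable M

theorem isStrictOrder_realize_ltSent {M : Type*} [(L₀[[ι]]).Structure M] (h : M ⊨ spo L₀ R ι) :
    IsStrictOrder ι fun d d' => M ⊨ ltSent L₀ R ι d d' := by
  have hirrefl := Relations.realize_irreflexive.1
    (Theory.realize_sentence_of_mem (M := M) (spo L₀ R ι) (Set.mem_insert _ _))
  have htrans := Relations.realize_transitive.1
    (Theory.realize_sentence_of_mem (M := M) (spo L₀ R ι) (Set.mem_insert_of_mem _ rfl))
  simp only [realize_ltSent]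
  exact { irrefl := fun _ => hirrefl.irrefl _, trans := fun _ _ _ => htrans.trans _ _ _ }

theorem compatible_realize_ltSent {S : (L₀[[ι]]).Theory} (M : Theory.ModelType (S ∪ spo L₀ R ι)) :
    Compatible L₀ R ι (fun d d' => M ⊨ ltSent L₀ R ι d d') S := by
  have : M ⊨ S ∪ spo L₀ R ι ∪ {φ | ∃ d d', M ⊨ ltSent L₀ R ι d d' ∧ φ = ltSent L₀ R ι d d'} ∪
      {φ | ∃ d d', ¬ M ⊨ ltSent L₀ R ι d d' ∧ φ = ∼(ltSent L₀ R ι d d')} := by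
    refine Theory.model_union_iff.2 ⟨Theory.model_union_iff.2 ⟨M.is_model, ?_⟩, ?_⟩
    · exact (Theory.model_iff _).2 fun _ ⟨_, _, hlt, hφ⟩ => hφ ▸ hlt
    · exact (Theory.model_iff _).2 fun _ ⟨_, _, hlt, hφ⟩ => hφ ▸ (Sentence.realize_not M).2 hlt
  exact Theory.Model.isSatisfiable M

theorem Compatible.mono {p : ι → ι → Prop} {S S' : (L₀[[ι]]).Theory} (h : S ⊆ S')
    (hS' : Compatible L₀ R ι p S') : Compatible L₀ R ι p S :=
  Theory.IsSatisfiable.mono hS' <| Set.union_subset_union_left _ <|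
    Set.union_subset_union_left _ <| Set.union_subset_union_left _ h

variable [Fintype ι]

theorem consistent_base (e : LinearOrder ι) (form : ι → (L₀[[ι]]).Sentence) :
    Consistent L₀ R ι (base L₀ R ι e form) := by
  classical
  suffices ∀ (l : List ι) (B : (L₀[[ι]]).Theory), Consistent L₀ R ι B →
      Consistent L₀ R ι (l.foldl
        (fun B d => if Consistent L₀ R ι (B ∪ {form d}) then B ∪ {form d} else B) B) from
    this _ _ consistent_empty
  intro l
  induction l with
  | nil => exact fun _ hB => hB
  | cons d l ih =>
    intro B hB
    apply ih
    dsimp only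
    split_ifs with h
    exacts [h, hB]

theorem consistent_extension (e : LinearOrder ι) (form : ι → (L₀[[ι]]).Sentence) :
    Consistent L₀ R ι (extension L₀ R ι e form) :=
  consistent_closure (consistent_base e form)

theorem Exts_anti (form : ι → (L₀[[ι]]).Sentence) : Antitone (Exts L₀ R ι form) :=
  fun _ _ h _ ⟨e, p, hp, hcompat, hle, hE⟩ => ⟨e, p, hp, hcompat.mono h, hle, hE⟩

theorem C_mono (form : ι → (L₀[[ι]]).Sentence) : Monotone (C L₀ R ι form) :=
  fun _ _ h => Set.sInter_subset_sInter (Exts_anti form h)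

theorem exists_extension_mem_Exts (form : ι → (L₀[[ι]]).Sentence) {S : (L₀[[ι]]).Theory}
    (h : Consistent L₀ R ι S) : ∃ e, extension L₀ R ι e form ∈ Exts L₀ R ι form S := by
  obtain ⟨M⟩ := h
  have hp := isStrictOrder_realize_ltSent (M := M) (M.is_model.mono Set.subset_union_right)
  obtain ⟨e, he⟩ := exists_linearOrder_of_isStrictOrder fun d d' => M ⊨ ltSent L₀ R ι d d'
  exact ⟨e, e, _, hp, compatible_realize_ltSent M, he, rfl⟩

theorem Consistent.C (form : ι → (L₀[[ι]]).Sentence) {S : (L₀[[ι]]).Theory}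
    (h : Consistent L₀ R ι S) : Consistent L₀ R ι (C L₀ R ι form S) := by
  obtain ⟨e, he⟩ := exists_extension_mem_Exts form h
  exact (consistent_extension e form).mono (Set.sInter_subset_of_mem he)

/-- Proposition 3: the set of accepted conclusions is consistent. -/
theorem accepted_consistent (ι : Type) [Fintype ι] (form : ι → (baseLang[[ι]]).Sentence) :
    Theory.IsSatisfiable (lfpC baseLang Rsym ι form ∪ spo baseLang Rsym ι) := by
  let f : (baseLang[[ι]]).Theory →o (baseLang[[ι]]).Theory := ⟨C baseLang Rsym ι form, C_mono form⟩
  change Consistent baseLang Rsym ι f.lfp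
  refine f.lfp_induction_of_isChain consistent_empty (fun _ h => h.C form) ?_
  intro s hne hchain hs
  exact Theory.isSatisfiable_sUnion_union hne hchain.directedOn hs

end Brevis
end

section
/- All maximal consistent subsets of the formulas of the theory are extension bases: if M ⊆ {form d | d : ι}, M ∪ SPO is satisfiable, and for every d : ι with form d ∉ M the theory M ∪ {form d} ∪ SPO is unsatisfiable, then there exists a linear order e on ι with B(e) = M. (Claim 'Obviously, all maximal consistent subsets of form(T) are extension bases'.) -/
open FirstOrder Language

namespace Brevis

variable (L₀ : FirstOrder.Language.{0, 0}) (R : L₀.Relations 2) (ι : Type) [Fintype ι]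

/-! A maximal consistent set `M` is produced by any order that lists the names `d` with
`form d ∈ M` first: while the greedy construction runs through them it only ever holds
subsets of `M`, which are consistent, so it collects all of `M`; by maximality it then
rejects every remaining formula. -/

section Greedy

variable {α β : Type*} (P : Set α → Prop) (g : β → α)

open scoped Classical in
noncomputable def greedyStep (B : Set α) (b : β) : Set α :=
  if P (B ∪ {g b}) then B ∪ {g b} else B

variable {P g}

theorem greedyStep_of_mem {M B : Set α} {b : β} (hM : ∀ S ⊆ M, P S) (hB : B ⊆ M)
    (hb : g b ∈ M) : greedyStep P g B b = B ∪ {g b} :=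
  if_pos (hM _ (Set.union_subset hB (Set.singleton_subset_iff.2 hb)))

theorem greedyStep_of_not_consistent {M : Set α} {b : β} (hb : ¬ P (M ∪ {g b})) :
    greedyStep P g M b = M :=
  if_neg hb

theorem foldl_greedyStep_eq {M : Set α} (hM : ∀ S ⊆ M, P S)
    (hmax : ∀ b, g b ∉ M → ¬ P (M ∪ {g b})) :
    ∀ (l : List β) {B : Set α}, B ⊆ M → M ⊆ B ∪ g '' {b | b ∈ l} →
      l.Pairwise (fun a b => g b ∈ M → g a ∈ M) → l.foldl (greedyStep P g) B = M
  | [], B, hB, hcov, _ => hB.antisymm fun x hx => by simpa using hcov hx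
  | b :: l, B, hB, hcov, hl => by
    rw [List.pairwise_cons] at hl
    obtain ⟨hb_first, hl⟩ := hl
    rw [List.foldl_cons]
    by_cases hbM : g b ∈ M
    · rw [greedyStep_of_mem hM hB hbM]
      refine foldl_greedyStep_eq hM hmax l
        (Set.union_subset hB (Set.singleton_subset_iff.2 hbM)) (fun x hx => ?_) hl
      rcases hcov hx with hxB | ⟨c, hc, rfl⟩
      · exact Or.inl (Or.inl hxB)
      · rcases List.mem_cons.1 hc with rfl | hc
        · exact Or.inl (Or.inr rfl)
        · exact Or.inr ⟨c, hc, rfl⟩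
    · -- `b` and, by `hb_first`, every later name lie outside `M`, so `B` already covers `M`.
      have hBM : B = M := by
        refine hB.antisymm fun x hx => ?_
        rcases hcov hx with hxB | ⟨c, hc, rfl⟩
        · exact hxB
        · rcases List.mem_cons.1 hc with rfl | hc
          · exact absurd hx hbM
          · exact absurd (hb_first c hc hx) hbM
      subst hBM
      rw [greedyStep_of_not_consistent (hmax b hbM)]
      exact foldl_greedyStep_eq hM hmax l subset_rfl Set.subset_union_left hl

theorem exists_linearOrder_le_imp (p : β → Prop) :
    ∃ e : LinearOrder β, ∀ a b, e.le a b → p b → p a := by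
  classical
  let f : β → Bool ×ₗ Cardinal := fun d => toLex (decide ¬ p d, embeddingToCardinal d)
  have hf : f.Injective := fun a b h => embeddingToCardinal.injective congr(($h).2)
  refine ⟨LinearOrder.lift' f hf, fun a b hab hb => ?_⟩
  by_contra ha
  have hfab : f a ≤ f b := hab
  simp only [f, ha, hb, decide_true, decide_false, not_false_eq_true, not_true_eq_false] at hfab
  rcases Prod.Lex.toLex_le_toLex.1 hfab with h | ⟨h, -⟩ <;> exact absurd h (by dsimp only; decide)

end Greedy

theorem base_eq_foldl_greedyStep (e : LinearOrder ι) (form : ι → (L₀[[ι]]).Sentence) :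
    base L₀ R ι e form =
      (letI := e; Finset.univ.sort (· ≤ ·)).foldl (greedyStep (Consistent L₀ R ι) form) ∅ :=
  rfl

/-- All maximal consistent subsets of the formulas of the theory are extension bases. -/
theorem maximal_consistent_is_base (ι : Type) [Fintype ι]
    (form : ι → (baseLang[[ι]]).Sentence) (M : (baseLang[[ι]]).Theory)
    (hsub : M ⊆ Set.range form)
    (hcons : Theory.IsSatisfiable (M ∪ spo baseLang Rsym ι))
    (hmax : ∀ d : ι, form d ∉ M →
      ¬ Theory.IsSatisfiable (M ∪ {form d} ∪ spo baseLang Rsym ι)) :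
    ∃ e : LinearOrder ι, base baseLang Rsym ι e form = M := by
  obtain ⟨e, hM_first⟩ := exists_linearOrder_le_imp (fun d => form d ∈ M)
  refine ⟨e, ?_⟩
  let _ := e
  have hcover : M ⊆ ∅ ∪ form '' {d | d ∈ Finset.univ.sort (· ≤ ·)} := by
    intro x hx
    obtain ⟨d, rfl⟩ := hsub hx
    exact Or.inr ⟨d, by simp, rfl⟩
  rw [base_eq_foldl_greedyStep]
  exact foldl_greedyStep_eq (fun S hS => hcons.mono (Set.union_subset_union_left _ hS)) hmax
    _ (Set.empty_subset M) hcover ((Finset.pairwise_sort _ _).imp (hM_first _ _))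

end Brevis
end

section
/- If S is a consistent set of L-sentences (i.e. S ∪ SPO is satisfiable), then there exists a strict partial order on ι that is compatible with S. (Key step in the proof of Proposition 3.) -/
open FirstOrder Language

/-! Any model `M` of `S ∪ SPO` orders the names by `p d d' :↔ M ⊨ d < d'`. Because `M` satisfies
`SPO`, `p` is the preimage of a strict order under `d ↦ c_d^M`, and `M` itself is a model of
`S ∪ SPO` together with the literals `(d < d')` / `¬(d < d')` recording `p`. -/

namespace Brevis

variable {L₀ : FirstOrder.Language.{0, 0}} (R : L₀.Relations 2) {ι : Type}

def ltIn (M : Type*) [(L₀[[ι]]).Structure M] (d d' : ι) : Prop :=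
  M ⊨ ltSent L₀ R ι d d'

theorem ltIn_iff (M : Type*) [(L₀[[ι]]).Structure M] (d d' : ι) :
    ltIn R M d d' ↔
      Structure.RelMap (L := L₀[[ι]]) (Sum.inl R)
        ![((L₀.con d : (L₀[[ι]]).Constants) : M), ((L₀.con d' : (L₀[[ι]]).Constants) : M)] := by
  unfold ltIn ltSent
  erw [Sentence.Realize, Formula.Realize, BoundedFormula.realize_rel₂]
  simp only [Term.realize_constants]

theorem isStrictOrder_ltIn (M : Type*) [(L₀[[ι]]).Structure M] [M ⊨ spo L₀ R ι] :
    IsStrictOrder ι (ltIn R M) := by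
  let rM : M → M → Prop := fun x y => Structure.RelMap (L := L₀[[ι]]) (Sum.inl R) ![x, y]
  have hirr : Std.Irrefl rM := Relations.realize_irreflexive.1 <|
    Theory.realize_sentence_of_mem (spo L₀ R ι) (by simp [spo])
  have htrans : IsTrans M rM := Relations.realize_transitive.1 <|
    Theory.realize_sentence_of_mem (spo L₀ R ι) (by simp [spo])
  have hpre : ltIn R M = (fun d : ι => ((L₀.con d : (L₀[[ι]]).Constants) : M)) ⁻¹'o rM := by
    ext d d'
    exact ltIn_iff R M d d'
  have : IsStrictOrder M rM := {}
  rw [hpre]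
  infer_instance

theorem compatible_ltIn (S : (L₀[[ι]]).Theory) (M : Type*) [(L₀[[ι]]).Structure M]
    [Nonempty M] [hM : M ⊨ S ∪ spo L₀ R ι] : Compatible L₀ R ι (ltIn R M) S := by
  have : M ⊨ S ∪ spo L₀ R ι ∪ {φ | ∃ d d', ltIn R M d d' ∧ φ = ltSent L₀ R ι d d'} ∪
      {φ | ∃ d d', ¬ ltIn R M d d' ∧ φ = ∼(ltSent L₀ R ι d d')} := by
    rw [Theory.model_iff]
    rintro φ ((hφ | ⟨d, d', hlt, rfl⟩) | ⟨d, d', hnlt, rfl⟩)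
    · exact hM.realize_of_mem φ hφ
    · exact hlt
    · exact (Sentence.realize_not M).2 hnlt
  exact Theory.Model.isSatisfiable M

theorem exists_compatible_of_consistent_general (ι : Type)
    (S : (baseLang[[ι]]).Theory)
    (h : Theory.IsSatisfiable (S ∪ spo baseLang Rsym ι)) :
    ∃ p : ι → ι → Prop, IsStrictOrder ι p ∧ Compatible baseLang Rsym ι p S := by
  obtain ⟨M⟩ := h
  have : M ⊨ spo baseLang Rsym ι := Theory.Model.mono M.is_model Set.subset_union_right
  exact ⟨ltIn Rsym M, isStrictOrder_ltIn Rsym M, compatible_ltIn Rsym S M⟩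

/-- If `S` is consistent then some strict partial order on the names is compatible with `S`. -/
theorem exists_compatible_of_consistent (ι : Type) [Fintype ι]
    (S : (baseLang[[ι]]).Theory)
    (h : Theory.IsSatisfiable (S ∪ spo baseLang Rsym ι)) :
    ∃ p : ι → ι → Prop, IsStrictOrder ι p ∧ Compatible baseLang Rsym ι p S :=
  exists_compatible_of_consistent_general ι S h

end Brevis
end

section
/- The self-referential preference default theory with ι = Fin 2, form 0 = (1 < 0) (i.e. the atomic sentence R(c_1, c_0)) and form 1 = (0 < 1) (i.e. R(c_0, c_1)) has no preferred extension: there is no set E of L-sentences with E ∈ Ext(E) that arises as an extension of this theory. -/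
open FirstOrder Language

namespace Brevis

variable (L₀ : FirstOrder.Language.{0, 0}) (R : L₀.Relations 2) (ι : Type) [Fintype ι]

/-! Whichever name `d` a linear order puts first, its default `d.rev < d` is consistent and
enters the extension; a partial order compatible with that extension must then contain
`d.rev < d`, which the linear order contradicts. -/

section General

variable {L₀ : FirstOrder.Language.{0, 0}} {R : L₀.Relations 2} {ι : Type}

lemma subset_foldl_of_subset_step {α β : Type*} (g : Set α → β → Set α)
    (hg : ∀ B d, B ⊆ g B d) (l : List β) (B : Set α) : B ⊆ l.foldl g B := by
  induction l generalizing B with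
  | nil => exact subset_rfl
  | cons d l ih => exact (hg B d).trans (ih (g B d))

/-- The least name is processed first, so its default enters the base as soon as it is
consistent on its own; later steps only enlarge the base. -/
lemma form_mem_base_of_forall_le [Fintype ι] (e : LinearOrder ι)
    (form : ι → (L₀[[ι]]).Sentence) {d : ι} (hd : ∀ d', e.le d d')
    (hc : Consistent L₀ R ι {form d}) : form d ∈ base L₀ R ι e form := by
  let := e
  have hsort : Finset.univ.sort (· ≤ · : ι → ι → Prop) =
      d :: (Finset.univ.erase d).sort (· ≤ ·) := by
    rw [← Finset.sort_insert _ (fun d' _ => hd d') (Finset.notMem_erase d _),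
      Finset.insert_erase (Finset.mem_univ d)]
  rw [base, hsort, List.foldl_cons, Set.empty_union, if_pos hc]
  refine subset_foldl_of_subset_step _ (fun B d' => ?_) _ _ rfl
  split_ifs
  exacts [Set.subset_union_left, subset_rfl]

lemma subset_closure (S : (L₀[[ι]]).Theory) : S ⊆ closure L₀ R ι S :=
  fun _ hφ => Theory.models_sentence_of_mem (Or.inl hφ)

lemma Compatible.rel_of_ltSent_mem {p : ι → ι → Prop} {S : (L₀[[ι]]).Theory}
    (h : Compatible L₀ R ι p S) {d d' : ι} (hS : ltSent L₀ R ι d d' ∈ S) : p d d' := by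
  by_contra hp
  obtain ⟨M⟩ := h
  have hM := (Theory.model_iff _).1 M.is_model
  have hlt : M ⊨ ltSent L₀ R ι d d' := hM _ (Or.inl (Or.inl (Or.inl hS)))
  have hnlt : M ⊨ ∼(ltSent L₀ R ι d d') := hM _ (Or.inr ⟨d, d', hp, rfl⟩)
  exact (Sentence.realize_not M).1 hnlt hlt

end General

noncomputable abbrev singlePairStructure {ι : Type} (d d' : ι) : (baseLang[[ι]]).Structure ι :=
  letI : baseLang.Structure ι :=
    { funMap := fun f _ => f.elim
      RelMap := fun {n} _ x => match n, x with
        | 2, x => x 0 = d ∧ x 1 = d' }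
  letI : (constantsOn ι).Structure ι := constantsOn.structure id
  Language.withConstantsStructure baseLang ι

lemma consistent_ltSent {ι : Type} {d d' : ι} (h : d ≠ d') :
    Consistent baseLang Rsym ι {ltSent baseLang Rsym ι d d'} := by
  let := singlePairStructure d d'
  have hR : ∀ x y : ι, Structure.RelMap (L := baseLang[[ι]]) (Sum.inl Rsym) ![x, y] ↔
      x = d ∧ y = d' := fun _ _ => Iff.rfl
  have hlt : ι ⊨ ltSent baseLang Rsym ι d d' := (hR d d').2 ⟨rfl, rfl⟩
  have hirrefl : ι ⊨ Relations.irreflexive (L := baseLang[[ι]]) (Sum.inl Rsym) :=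
    Relations.realize_irreflexive.2 ⟨fun x hx =>
      have hx := (hR x x).1 hx
      h (hx.1.symm.trans hx.2)⟩
  have htrans : ι ⊨ Relations.transitive (L := baseLang[[ι]]) (Sum.inl Rsym) :=
    Relations.realize_transitive.2 ⟨fun x y z hxy hyz =>
      (h (((hR y z).1 hyz).1.symm.trans ((hR x y).1 hxy).2)).elim⟩
  have : ι ⊨ {ltSent baseLang Rsym ι d d'} ∪ spo baseLang Rsym ι := by
    simp only [Theory.model_union_iff, Theory.model_singleton_iff, spo, Theory.model_insert_iff]
    exact ⟨hlt, hirrefl, htrans⟩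
  have : Nonempty ι := ⟨d⟩
  exact Theory.Model.isSatisfiable ι

/-- The self-referential theory `d₁ : d₂ < d₁`, `d₂ : d₁ < d₂` has no preferred extension. -/
theorem no_preferred_extension :
    ¬ ∃ E : (baseLang[[Fin 2]]).Theory,
        E ∈ Exts baseLang Rsym (Fin 2)
          ![ltSent baseLang Rsym (Fin 2) 1 0, ltSent baseLang Rsym (Fin 2) 0 1] E := by
  rintro ⟨_, e, p, -, hcompat, hext, rfl⟩
  let := e
  obtain ⟨d, hd⟩ := Finite.exists_min (id : Fin 2 → Fin 2)
  have hform : ![ltSent baseLang Rsym (Fin 2) 1 0, ltSent baseLang Rsym (Fin 2) 0 1] d =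
      ltSent baseLang Rsym (Fin 2) d.rev d := by
    fin_cases d <;> rfl
  have hne : d.rev ≠ d := by fin_cases d <;> decide
  have hmem : ltSent baseLang Rsym (Fin 2) d.rev d ∈ extension baseLang Rsym (Fin 2) e _ :=
    hform ▸ subset_closure _ (form_mem_base_of_forall_le e _ hd (hform ▸ consistent_ltSent hne))
  exact ((e.lt_iff_le_not_ge _ _).1 (hext _ _ (hcompat.rel_of_ltSent_mem hmem))).2 (hd d.rev)

end Brevis
end

section
/- Counterexample to AGM postulate (T*3), unrevised side: for the preference default theory with ι = Fin 2 (in the language enlarged with P), form 0 = p and form 1 = ¬p, the set of accepted conclusions is exactly the set of tautologies modulo SPO: lfp(C) = {φ : L.Sentence | every model of SPO satisfies φ}; in particular p ∉ lfp(C) and ¬p ∉ lfp(C). -/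
open FirstOrder Language

/-!
Both linear orders on the two names extend the empty order, which is compatible with the
tautologies: a one-point structure with `R` empty models them. The order putting `p` first has
extension base `{p}`, the other `{¬p}`, so `C` of the tautologies is contained in
`Cn({p}) ∩ Cn({¬p})`, which is the set of tautologies by a case split on `p` in each model.
Hence the tautologies are a prefixed point of `C`; conversely every extension, and so every
prefixed point, contains them. One-point models with `p` true and false show that neither `p`
nor `¬p` is a tautology.
-/

namespace Brevis

section Closure

variable {L₀ : FirstOrder.Language.{0, 0}} {R : L₀.Relations 2} {ι : Type}

theorem closure_mono {S T : (L₀[[ι]]).Theory} (h : S ⊆ T) :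
    closure L₀ R ι S ⊆ closure L₀ R ι T :=
  fun _ hφ M => hφ (M.subtheoryModel (Set.union_subset_union_left _ h))

theorem closure_union_inter_closure_union_not_subset (S : (L₀[[ι]]).Theory)
    (φ : (L₀[[ι]]).Sentence) :
    closure L₀ R ι (S ∪ {φ}) ∩ closure L₀ R ι (S ∪ {∼φ}) ⊆
      closure L₀ R ι S := by
  rintro ψ ⟨hpos, hneg⟩
  refine Theory.models_sentence_iff.2 fun M => ?_
  obtain ⟨hS, hspo⟩ := Theory.model_union_iff.1 M.is_model
  by_cases hφ : M ⊨ φ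
  · have : M ⊨ S ∪ {φ} ∪ spo L₀ R ι := by
      simp only [Theory.model_union_iff, Theory.model_singleton_iff]
      exact ⟨⟨hS, hφ⟩, hspo⟩
    exact hpos.realize_sentence M
  · have : M ⊨ S ∪ {∼φ} ∪ spo L₀ R ι := by
      simp only [Theory.model_union_iff, Theory.model_singleton_iff, Sentence.realize_not]
      exact ⟨⟨hS, hφ⟩, hspo⟩
    exact hneg.realize_sentence M

theorem not_consistent_union_not (φ : (L₀[[ι]]).Sentence) :
    ¬ Consistent L₀ R ι ({φ} ∪ {∼φ}) := by
  rintro ⟨M⟩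
  have hφ : M ⊨ φ := M.is_model.realize_of_mem _ (by simp)
  have hnφ : M ⊨ ∼φ := M.is_model.realize_of_mem _ (by simp)
  exact (Sentence.realize_not M).1 hnφ hφ

variable (M : Type) [L₀[[ι]].Structure M] [Nonempty M] [M ⊨ spo L₀ R ι]

theorem consistent_singleton_of_realize {φ : (L₀[[ι]]).Sentence} (h : M ⊨ φ) :
    Consistent L₀ R ι {φ} :=
  have : M ⊨ {φ} ∪ spo L₀ R ι :=
    Theory.model_union_iff.2 ⟨Theory.model_singleton_iff.2 h, inferInstance⟩
  Theory.Model.isSatisfiable M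

theorem notMem_closure_empty_of_not_realize {φ : (L₀[[ι]]).Sentence} (h : ¬ M ⊨ φ) :
    φ ∉ closure L₀ R ι ∅ := by
  have : M ⊨ ∅ ∪ spo L₀ R ι := by rwa [Set.empty_union]
  exact fun hφ => h (hφ.realize_sentence M)

theorem compatible_bot_closure_empty (hR : ∀ d d', ¬ M ⊨ ltSent L₀ R ι d d') :
    Compatible L₀ R ι (fun _ _ => False) (closure L₀ R ι ∅) := by
  have : M ⊨ ∅ ∪ spo L₀ R ι := by rwa [Set.empty_union]
  refine @Theory.Model.isSatisfiable _ _ M _ _ ((Theory.model_iff _).2 ?_)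
  rintro φ (((hφ | hφ) | ⟨_, _, hF, -⟩) | ⟨d, d', -, rfl⟩)
  · exact Theory.ModelsBoundedFormula.realize_sentence hφ M
  · exact Theory.realize_sentence_of_mem _ hφ
  · exact hF.elim
  · exact (Sentence.realize_not M).2 (hR d d')

end Closure

section Extensions

variable {L₀ : FirstOrder.Language.{0, 0}} {R : L₀.Relations 2} {ι : Type} [Fintype ι]

theorem closure_empty_subset_C (form : ι → (L₀[[ι]]).Sentence) (S : (L₀[[ι]]).Theory) :
    closure L₀ R ι ∅ ⊆ C L₀ R ι form S := by
  rintro φ hφ _ ⟨e, p, -, -, -, rfl⟩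
  exact closure_mono (Set.empty_subset _) hφ

theorem closure_empty_subset_lfpC (form : ι → (L₀[[ι]]).Sentence) :
    closure L₀ R ι ∅ ⊆ lfpC L₀ R ι form :=
  le_sInf fun S hS => (closure_empty_subset_C form S).trans hS

theorem C_subset_extension_of_compatible_bot (form : ι → (L₀[[ι]]).Sentence)
    {S : (L₀[[ι]]).Theory} (h : Compatible L₀ R ι (fun _ _ => False) S) (e : LinearOrder ι) :
    C L₀ R ι form S ⊆ extension L₀ R ι e form :=
  Set.sInter_subset_of_mem
    ⟨e, fun _ _ => False, { irrefl := fun _ => id, trans := fun _ _ _ h _ => h },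
      h, fun _ _ => False.elim, rfl⟩

theorem lfpC_eq_closure_empty (form : ι → (L₀[[ι]]).Sentence)
    (hcompat : Compatible L₀ R ι (fun _ _ => False) (closure L₀ R ι ∅))
    (h : ⋂ e : LinearOrder ι, extension L₀ R ι e form ⊆ closure L₀ R ι ∅) :
    lfpC L₀ R ι form = closure L₀ R ι ∅ :=
  le_antisymm
    (sInf_le (show C L₀ R ι form (closure L₀ R ι ∅) ⊆ _ from
      (Set.subset_iInter (C_subset_extension_of_compatible_bot form hcompat)).trans h))
    (closure_empty_subset_lfpC form)

theorem sort_univ_eq_pair {κ : Type} [Fintype κ] [LinearOrder κ] {a b : κ} (hab : a < b)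
    (huniv : (Finset.univ : Finset κ) = {a, b}) :
    Finset.univ.sort (· ≤ ·) = [a, b] := by
  rw [huniv, Finset.sort_insert _ (by simpa using hab.le) (by simpa using hab.ne),
    Finset.sort_singleton]

theorem base_eq_singleton_of_univ_eq_pair (e : LinearOrder ι) (form : ι → (L₀[[ι]]).Sentence)
    {a b : ι} (hlt : letI := e; a < b) (huniv : (Finset.univ : Finset ι) = {a, b})
    (ha : Consistent L₀ R ι {form a}) (hab : ¬ Consistent L₀ R ι ({form a} ∪ {form b})) :
    base L₀ R ι e form = {form a} := by
  rw [base, @sort_univ_eq_pair _ _ e _ _ hlt huniv]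
  simp only [List.foldl_cons, List.foldl_nil, Set.empty_union, ha, hab, ite_true, ite_false]

end Extensions

section PointModel

variable {ι : Type} {b : Prop}

def PointModel (_b : Prop) : Type := Unit

instance : Nonempty (PointModel b) := inferInstanceAs (Nonempty Unit)

instance : (baseLangP[[ι]]).Structure (PointModel b) where
  funMap := fun _ _ => ()
  RelMap := fun {n} r _ => match n, r with
    | 0, Sum.inl _ => b
    | _, _ => False

theorem pointModel_realize_pSent : PointModel b ⊨ pSent ι ↔ b := Iff.rfl

theorem pointModel_not_realize_ltSent (d d' : ι) :
    ¬ PointModel b ⊨ ltSent baseLangP RsymP ι d d' := id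

instance : PointModel b ⊨ spo baseLangP RsymP ι :=
  Theory.model_insert_iff.2 ⟨Relations.realize_irreflexive.2 ⟨fun _ => id⟩,
    Theory.model_singleton_iff.2 (Relations.realize_transitive.2 ⟨fun _ _ _ h _ => h.elim⟩)⟩

end PointModel

theorem base_pSent_not_pSent_eq_pSent :
    base baseLangP RsymP (Fin 2) inferInstance ![pSent (Fin 2), ∼(pSent (Fin 2))] =
      {pSent (Fin 2)} :=
  base_eq_singleton_of_univ_eq_pair _ _ (a := 0) (b := 1) (by decide) (by decide)
    (consistent_singleton_of_realize (PointModel True) (pointModel_realize_pSent.2 trivial))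
    (not_consistent_union_not _)

theorem base_dual_pSent_not_pSent_eq_not_pSent :
    base baseLangP RsymP (Fin 2) (OrderDual.instLinearOrder (Fin 2))
      ![pSent (Fin 2), ∼(pSent (Fin 2))] = {∼(pSent (Fin 2))} :=
  -- `1 < 0` in the dual order is `0 < 1` in `Fin 2`
  base_eq_singleton_of_univ_eq_pair _ _ (a := 1) (b := 0) (show (0 : Fin 2) < 1 by decide)
    (by decide)
    (consistent_singleton_of_realize (PointModel False)
      ((Sentence.realize_not _).2 pointModel_realize_pSent.1))
    (Set.union_comm {pSent (Fin 2)} _ ▸ not_consistent_union_not _)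

/-- Counterexample to (T*3), unrevised side: for the theory `{p, ¬p}`, the accepted
conclusions are exactly the tautologies modulo `SPO`; in particular neither `p` nor `¬p`
is accepted. -/
theorem counterexample_T3_unrevised :
    lfpC baseLangP RsymP (Fin 2) ![pSent (Fin 2), ∼(pSent (Fin 2))] =
        closure baseLangP RsymP (Fin 2) ∅ ∧
    pSent (Fin 2) ∉ lfpC baseLangP RsymP (Fin 2) ![pSent (Fin 2), ∼(pSent (Fin 2))] ∧
    ∼(pSent (Fin 2)) ∉ lfpC baseLangP RsymP (Fin 2) ![pSent (Fin 2), ∼(pSent (Fin 2))] := by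
  have hlfpC : lfpC baseLangP RsymP (Fin 2) ![pSent (Fin 2), ∼(pSent (Fin 2))] =
      closure baseLangP RsymP (Fin 2) ∅ := by
    refine lfpC_eq_closure_empty _
      (compatible_bot_closure_empty (PointModel True) pointModel_not_realize_ltSent) ?_
    refine (Set.subset_inter (Set.iInter_subset _ (inferInstance : LinearOrder (Fin 2)))
      (Set.iInter_subset _ (OrderDual.instLinearOrder (Fin 2)))).trans ?_
    simp only [extension, base_pSent_not_pSent_eq_pSent, base_dual_pSent_not_pSent_eq_not_pSent]
    simpa only [Set.empty_union] using closure_union_inter_closure_union_not_subset ∅ _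
  refine ⟨hlfpC, hlfpC ▸ ?_, hlfpC ▸ ?_⟩
  · exact notMem_closure_empty_of_not_realize (PointModel False) pointModel_realize_pSent.1
  · exact notMem_closure_empty_of_not_realize (PointModel True)
      fun h => (Sentence.realize_not _).1 h (pointModel_realize_pSent.2 trivial)

end Brevis
end

section
/- Syntax-independence of accepted conclusions under logical equivalence (postulate (T*6)): let form, form' : ι → L.Sentence be preference default theories and d₀ : ι such that form d = form' d for all d ≠ d₀, and such that the sentences form d₀ and form' d₀ are satisfied by exactly the same L-structures (they are logically equivalent). Then the respective sets of accepted conclusions coincide: lfp(C_form) = lfp(C_{form'}). -/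
open FirstOrder Language

namespace Brevis

variable (L₀ : FirstOrder.Language.{0, 0}) (R : L₀.Relations 2) (ι : Type) [Fintype ι]

section ModEq

variable {L : FirstOrder.Language.{0, 0}}

/-- Two theories with exactly the same models. -/
def ModEq (S S' : L.Theory) : Prop :=
  ∀ (M : Type) [Nonempty M] [L.Structure M], M ⊨ S ↔ M ⊨ S'

theorem ModEq.refl (S : L.Theory) : ModEq S S := fun _ _ _ => Iff.rfl

theorem ModEq.symm {S S' : L.Theory} (h : ModEq S S') : ModEq S' S :=
  fun M _ _ => (h M).symm

theorem ModEq.union {S S' T T' : L.Theory} (h : ModEq S S') (h' : ModEq T T') :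
    ModEq (S ∪ T) (S' ∪ T') := by
  intro M _ _
  rw [Theory.model_union_iff, Theory.model_union_iff, h M, h' M]

theorem modEq_singleton {φ φ' : L.Sentence}
    (h : ∀ (M : Type) [Nonempty M] [L.Structure M], M ⊨ φ ↔ M ⊨ φ') :
    ModEq ({φ} : L.Theory) {φ'} := by
  intro M _ _
  rw [Theory.model_singleton_iff, Theory.model_singleton_iff, h M]

theorem ModEq.isSat {S S' : L.Theory} (h : ModEq S S') :
    S.IsSatisfiable ↔ S'.IsSatisfiable := by
  constructor <;> rintro ⟨M⟩
  · exact ⟨Theory.Model.bundled ((h M).mp M.is_model)⟩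
  · exact ⟨Theory.Model.bundled ((h M).mpr M.is_model)⟩

theorem ModEq.models {S S' : L.Theory} (h : ModEq S S') {φ : L.Sentence}
    (hφ : S ⊨ᵇ φ) : S' ⊨ᵇ φ := by
  intro M v xs
  have hM : (M : Type) ⊨ S := (h M).mpr M.is_model
  exact hφ (Theory.Model.bundled hM) v xs

end ModEq

/-- Postulate (T*6): replacing one formula of the theory by a logically equivalent one
does not change the set of accepted conclusions. -/
theorem accepted_syntax_independent (ι : Type) [Fintype ι]
    (form form' : ι → (baseLang[[ι]]).Sentence) (d₀ : ι)
    (h1 : ∀ d : ι, d ≠ d₀ → form d = form' d)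
    (h2 : ∀ (M : Type) [Nonempty M] [(baseLang[[ι]]).Structure M],
      M ⊨ form d₀ ↔ M ⊨ form' d₀) :
    lfpC baseLang Rsym ι form = lfpC baseLang Rsym ι form' := by
  classical
  have hform : ∀ (d : ι) (M : Type) [Nonempty M] [(baseLang[[ι]]).Structure M],
      M ⊨ form d ↔ M ⊨ form' d := by
    intro d M _ _
    by_cases hd : d = d₀
    · subst hd; exact h2 M
    · rw [h1 d hd]
  -- model equivalence of bases
  have hbase : ∀ e : LinearOrder ι,
      ModEq (base baseLang Rsym ι e form) (base baseLang Rsym ι e form') := by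
    intro e
    unfold base
    generalize (Finset.univ.sort (α := ι) (· ≤ ·)) = l
    have : ∀ (B B' : (baseLang[[ι]]).Theory), ModEq B B' →
        ModEq
          (l.foldl (fun B d =>
            if Consistent baseLang Rsym ι (B ∪ {form d}) then B ∪ {form d} else B) B)
          (l.foldl (fun B d =>
            if Consistent baseLang Rsym ι (B ∪ {form' d}) then B ∪ {form' d} else B) B') := by
      induction l with
      | nil => intro B B' h; exact h
      | cons d l ih =>
        intro B B' h
        have hstep : ModEq (B ∪ {form d}) (B' ∪ {form' d}) :=
          h.union (modEq_singleton (hform d))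
        have hcons : Consistent baseLang Rsym ι (B ∪ {form d}) ↔
            Consistent baseLang Rsym ι (B' ∪ {form' d}) :=
          (hstep.union (ModEq.refl _)).isSat
        simp only [List.foldl_cons]
        by_cases hc : Consistent baseLang Rsym ι (B ∪ {form d})
        · rw [if_pos hc, if_pos (hcons.mp hc)]; exact ih _ _ hstep
        · rw [if_neg hc, if_neg (fun h' => hc (hcons.mpr h'))]; exact ih _ _ h
    exact this ∅ ∅ (ModEq.refl _)
  have hext : ∀ e : LinearOrder ι,
      extension baseLang Rsym ι e form = extension baseLang Rsym ι e form' := by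
    intro e
    have h := (hbase e).union (ModEq.refl (spo baseLang Rsym ι))
    ext φ
    exact ⟨fun hφ => h.models hφ, fun hφ => h.symm.models hφ⟩
  have hExts : ∀ S, Exts baseLang Rsym ι form S = Exts baseLang Rsym ι form' S := by
    intro S
    ext E
    constructor <;> rintro ⟨e, p, hso, hcomp, hlt, rfl⟩
    · exact ⟨e, p, hso, hcomp, hlt, hext e⟩
    · exact ⟨e, p, hso, hcomp, hlt, (hext e).symm⟩
  have hC : C baseLang Rsym ι form = C baseLang Rsym ι form' := by
    funext S; unfold C; rw [hExts]
  unfold lfpC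
  rw [hC]

end Brevis
end
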